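/- arXiv:1908.01552 — 2 statements merged into one kernel-verified Lean document; each statement's English description precedes it below -/
import Mathlib

section
/- Let (X_k)_{k≥0} be i.i.d. real random variables with 𝔼[(X_0^+)^2] < ∞ and finite mean 𝔼X_0 (possibly −∞). Set S_n = X_0 + ⋯ + X_{n-1}. Then for every c > 𝔼X_0, the series ∑_{n≥0} ℙ(S_n ≥ cn) converges. -/
/-!
Truncate the `X_k` from below at a level `-M` chosen so that `Y_k = max X_k (-M)` still has
mean `μ < c` (monotone convergence). Then `S_n ≤ Y_0 + ⋯ + Y_{n-1}` and `Y_0` is square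
integrable. With `ε = (c - μ) / 4`, either some `Y_k` exceeds `εn`, which a union bound makes
`n ℙ(Y_0 > εn)`, summable because `𝔼[Y_0²] < ∞`; or the sum of the `Y_k` capped at `εn` is at
least `cn`. For the capped variables the Chernoff bound with `t = 2 log n / ((c - μ) n)`
gives `O(n⁻²)`: the cap keeps `e^{tY}` below `√n`, so the quadratic term of the moment
generating function stays bounded.
-/

open MeasureTheory ProbabilityTheory Filter
open scoped ENNReal

open Finset Real

theorem Real.exp_le_one_add_add_sq_mul_exp {y b : ℝ} (hy : y ≤ b) (hb : 0 ≤ b) :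
    exp y ≤ 1 + y + y ^ 2 * exp b := by
  have h1 : (1 - y) * exp y ≤ 1 := by
    have := mul_le_mul_of_nonneg_right (add_one_le_exp (-y)) (exp_pos y).le
    rwa [← exp_add, neg_add_cancel, exp_zero, neg_add_eq_sub] at this
  have hb1 : 1 ≤ exp b := one_le_exp hb
  rcases le_or_gt y 0 with h | h
  · nlinarith [exp_pos y, mul_nonneg (sq_nonneg y) (sub_nonneg.2 hb1)]
  · have hey : exp y ≤ exp b := exp_le_exp.2 hy
    rcases le_or_gt 1 y with h1y | h1y
    · nlinarith [exp_pos y]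
    · nlinarith [exp_pos y, sq_nonneg y]

theorem Real.sq_log_mul_exp_half_log_le {x : ℝ} (hx : 1 ≤ x) :
    log x ^ 2 * exp (log x / 2) ≤ 8 * x := by
  have hu : 0 ≤ log x / 2 := by have := log_nonneg hx; linarith
  have hquad : (log x / 2) ^ 2 ≤ 2 * exp (log x / 2) := by
    have := pow_div_factorial_le_exp _ hu 2
    norm_num [Nat.factorial] at this
    linarith
  calc log x ^ 2 * exp (log x / 2) = 4 * (log x / 2) ^ 2 * exp (log x / 2) := by ring
    _ ≤ 4 * (2 * exp (log x / 2)) * exp (log x / 2) := by gcongr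
    _ = 8 * x := by rw [mul_assoc, mul_assoc, ← exp_add, add_halves, exp_log (by linarith)]; ring

theorem tsum_ite_lt_natCast_le {ε : ℝ} (hε : 0 < ε) (y : ℝ) :
    ∑' n : ℕ, (if ε * n < y then (n : ℝ≥0∞) else 0) ≤ ENNReal.ofReal (2 / ε ^ 2 * y ^ 2 + 2) := by
  set m := ⌈y / ε⌉₊
  have hvanish : ∀ n ∉ range m, (if ε * n < y then (n : ℝ≥0∞) else 0) = 0 := by
    intro n hn
    have : y ≤ ε * n := by
      rw [← div_le_iff₀' hε]
      exact Nat.ceil_le.1 (not_lt.1 (mem_range.not.1 hn))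
    simp [this.not_gt]
  have hm : (m : ℝ) ≤ |y / ε| + 1 :=
    (Nat.cast_le.2 (Nat.ceil_mono (le_abs_self _))).trans (Nat.ceil_lt_add_one (abs_nonneg _)).le
  calc ∑' n : ℕ, (if ε * n < y then (n : ℝ≥0∞) else 0)
      = ∑ n ∈ range m, (if ε * n < y then (n : ℝ≥0∞) else 0) := tsum_eq_sum hvanish
    _ ≤ ∑ _n ∈ range m, (m : ℝ≥0∞) := sum_le_sum fun n hn => by
        split_ifs
        · exact Nat.cast_le.2 (mem_range.1 hn).le
        · exact zero_le
    _ = ENNReal.ofReal ((m : ℝ) * m) := by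
        rw [sum_const, card_range, nsmul_eq_mul, ENNReal.ofReal_mul (Nat.cast_nonneg _)]
        simp
    _ ≤ ENNReal.ofReal (2 / ε ^ 2 * y ^ 2 + 2) := by
        refine ENNReal.ofReal_le_ofReal ?_
        have hsq : 2 / ε ^ 2 * y ^ 2 = 2 * |y / ε| ^ 2 := by
          rw [sq_abs, div_pow]; ring
        rw [hsq]
        nlinarith [mul_le_mul hm hm (Nat.cast_nonneg _) (by positivity), sq_nonneg (|y / ε| - 1)]

section

variable {Ω : Type*} [MeasurableSpace Ω] {P : Measure Ω}

theorem tsum_natCast_mul_measure_lt_lt_top [IsFiniteMeasure P] {Y : Ω → ℝ} (hY : Measurable Y)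
    (hY2 : Integrable (fun ω => Y ω ^ 2) P) {ε : ℝ} (hε : 0 < ε) :
    ∑' n : ℕ, (n : ℝ≥0∞) * P {ω | ε * n < Y ω} < ∞ := by
  have hset : ∀ n : ℕ, MeasurableSet {ω | ε * n < Y ω} := fun n =>
    measurableSet_lt measurable_const hY
  calc ∑' n : ℕ, (n : ℝ≥0∞) * P {ω | ε * n < Y ω}
      = ∑' n : ℕ, ∫⁻ ω, {ω | ε * n < Y ω}.indicator (fun _ => (n : ℝ≥0∞)) ω ∂P :=
        tsum_congr fun n => (lintegral_indicator_const (hset n) _).symm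
    _ = ∫⁻ ω, ∑' n : ℕ, {ω | ε * n < Y ω}.indicator (fun _ => (n : ℝ≥0∞)) ω ∂P :=
        (lintegral_tsum fun n => (measurable_const.indicator (hset n)).aemeasurable).symm
    _ ≤ ∫⁻ ω, ENNReal.ofReal (2 / ε ^ 2 * Y ω ^ 2 + 2) ∂P :=
        lintegral_mono fun ω => tsum_ite_lt_natCast_le hε (Y ω)
    _ < ∞ := ((hY2.const_mul _).add (integrable_const _)).lintegral_lt_top

theorem measure_le_sum_range_le_add_sum_min {Y : ℕ → Ω → ℝ}
    (hident : ∀ k, IdentDistrib (Y k) (Y 0) P P) (a b : ℝ) (n : ℕ) :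
    P {ω | a ≤ ∑ k ∈ range n, Y k ω}
      ≤ n * P {ω | b < Y 0 ω} + P {ω | a ≤ ∑ k ∈ range n, min (Y k ω) b} := by
  have hsub : {ω | a ≤ ∑ k ∈ range n, Y k ω}
      ⊆ (⋃ k ∈ range n, {ω | b < Y k ω}) ∪ {ω | a ≤ ∑ k ∈ range n, min (Y k ω) b} := by
    intro ω hω
    by_cases hbig : ∃ k ∈ range n, b < Y k ω
    · obtain ⟨k, hk, hkω⟩ := hbig
      exact Or.inl (Set.mem_biUnion hk hkω)
    · push Not at hbig
      refine Or.inr ?_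
      simpa only [Set.mem_ofPred_eq, sum_congr rfl fun k hk => min_eq_left (hbig k hk)] using hω
  calc P {ω | a ≤ ∑ k ∈ range n, Y k ω}
      ≤ P (⋃ k ∈ range n, {ω | b < Y k ω}) + P {ω | a ≤ ∑ k ∈ range n, min (Y k ω) b} :=
        (measure_mono hsub).trans (measure_union_le _ _)
    _ ≤ ∑ _k ∈ range n, P {ω | b < Y 0 ω} + P {ω | a ≤ ∑ k ∈ range n, min (Y k ω) b} := by
        gcongr
        refine (measure_biUnion_finset_le _ _).trans (sum_le_sum fun k _ => ?_)
        exact ((hident k).measure_mem_eq measurableSet_Ioi).le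
    _ = n * P {ω | b < Y 0 ω} + P {ω | a ≤ ∑ k ∈ range n, min (Y k ω) b} := by
        rw [sum_const, card_range, nsmul_eq_mul]

theorem mgf_le_exp_of_le [IsProbabilityMeasure P] {Z : Ω → ℝ} {b t : ℝ} (hZ : MemLp Z 2 P)
    (hle : ∀ᵐ ω ∂P, Z ω ≤ b) (hb : 0 ≤ b) (ht : 0 ≤ t) :
    mgf Z P t ≤ exp (t * P[Z] + t ^ 2 * exp (t * b) * ∫ ω, Z ω ^ 2 ∂P) := by
  set A := t ^ 2 * exp (t * b)
  have hlin : Integrable (fun ω => t * Z ω) P := (hZ.integrable one_le_two).const_mul t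
  have hquad : Integrable (fun ω => A * Z ω ^ 2) P := hZ.integrable_sq.const_mul A
  have hint : Integrable (fun ω => 1 + t * Z ω + A * Z ω ^ 2) P :=
    ((integrable_const 1).add hlin).add hquad
  calc mgf Z P t ≤ ∫ ω, (1 + t * Z ω + A * Z ω ^ 2) ∂P := by
        refine integral_mono_of_nonneg (.of_forall fun ω => (exp_pos _).le) hint ?_
        filter_upwards [hle] with ω hω
        have := exp_le_one_add_add_sq_mul_exp (mul_le_mul_of_nonneg_left hω ht)
          (mul_nonneg ht hb)
        linarith [show (t * Z ω) ^ 2 * exp (t * b) = A * Z ω ^ 2 by ring]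
    _ = 1 + (t * P[Z] + A * ∫ ω, Z ω ^ 2 ∂P) := by
        rw [integral_add (f := fun ω => 1 + t * Z ω) ((integrable_const 1).add hlin) hquad,
          integral_add (integrable_const 1) hlin,
          integral_const_mul, integral_const_mul]
        simp [add_assoc]
    _ ≤ exp (t * P[Z] + A * ∫ ω, Z ω ^ 2 ∂P) := by
        linarith [add_one_le_exp (t * P[Z] + A * ∫ ω, Z ω ^ 2 ∂P)]

theorem measureReal_le_sum_range_le_exp_mul_mgf_pow [IsFiniteMeasure P] {Z : ℕ → Ω → ℝ}
    (hmeas : ∀ k, Measurable (Z k)) (hindep : iIndepFun Z P)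
    (hident : ∀ k, IdentDistrib (Z k) (Z 0) P P) {t : ℝ} (ht : 0 ≤ t)
    (hint : Integrable (fun ω => exp (t * Z 0 ω)) P) (a : ℝ) (n : ℕ) :
    P.real {ω | a ≤ ∑ k ∈ range n, Z k ω} ≤ exp (-t * a) * mgf (Z 0) P t ^ n := by
  have hint_sum : Integrable (fun ω => exp (t * (∑ k ∈ range n, Z k) ω)) P :=
    hindep.integrable_exp_mul_sum hmeas fun k _ =>
      ((hident k).comp (measurable_const_mul t).exp).integrable_iff.2 hint
  have h := measure_ge_le_exp_mul_mgf a ht hint_sum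
  rw [hindep.mgf_sum hmeas, prod_congr rfl fun k _ => mgf_congr_of_identDistrib _ _ (hident k) t,
    prod_const, card_range] at h
  simpa only [Finset.sum_apply] using h

theorem measureReal_le_sum_range_min_le_exp_div_sq [IsProbabilityMeasure P] {Y : ℕ → Ω → ℝ}
    (hmeas : ∀ k, Measurable (Y k)) (hindep : iIndepFun Y P)
    (hident : ∀ k, IdentDistrib (Y k) (Y 0) P P) (hY : MemLp (Y 0) 2 P) {c : ℝ} (hc : P[Y 0] < c)
    {n : ℕ} (hn : 1 ≤ n) :
    P.real {ω | c * n ≤ ∑ k ∈ range n, min (Y k ω) ((c - P[Y 0]) / 4 * n)}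
      ≤ exp (32 * (∫ ω, Y 0 ω ^ 2 ∂P) / (c - P[Y 0]) ^ 2) / n ^ 2 := by
  set μ := P[Y 0]
  set δ := c - μ
  set q := ∫ ω, Y 0 ω ^ 2 ∂P
  set b := δ / 4 * n
  set t := 2 * log n / (δ * n)
  have hδ : 0 < δ := sub_pos.2 hc
  have hn' : (1 : ℝ) ≤ n := by exact_mod_cast hn
  have hb : 0 ≤ b := by positivity
  have ht : 0 ≤ t := by have := log_nonneg hn'; positivity
  have htb : t * b = log n / 2 := by simp only [t, b]; field_simp; ring
  have hq : 0 ≤ q := integral_nonneg fun ω => sq_nonneg _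
  set Z : ℕ → Ω → ℝ := fun k ω => min (Y k ω) b
  have hcap : Measurable fun x : ℝ => min x b := measurable_id.min measurable_const
  have hZmeas : ∀ k, Measurable (Z k) := fun k => hcap.comp (hmeas k)
  have hZsq_le : ∀ ω, Z 0 ω ^ 2 ≤ Y 0 ω ^ 2 := fun ω => by
    rcases le_total (Y 0 ω) b with h | h
    · simp [Z, min_eq_left h]
    · simp only [Z, min_eq_right h]; nlinarith
  have hZ : MemLp (Z 0) 2 P :=
    hY.mono (hZmeas 0).aestronglyMeasurable (.of_forall fun ω => by
      simpa only [Real.norm_eq_abs, sq_abs, sq_le_sq] using hZsq_le ω)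
  have hZmean : P[Z 0] ≤ μ :=
    integral_mono (hZ.integrable one_le_two) (hY.integrable one_le_two) fun ω => min_le_left _ _
  have hZsq : ∫ ω, Z 0 ω ^ 2 ∂P ≤ q := integral_mono hZ.integrable_sq hY.integrable_sq hZsq_le
  have hmgf : mgf (Z 0) P t ≤ exp (t * μ + t ^ 2 * exp (t * b) * q) :=
    (mgf_le_exp_of_le hZ (.of_forall fun ω => min_le_right _ _) hb ht).trans (by gcongr)
  have hexp_int : Integrable (fun ω => exp (t * Z 0 ω)) P :=
    .of_bound (by fun_prop) (exp (t * b)) (.of_forall fun ω => by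
      rw [Real.norm_eq_abs, abs_of_pos (exp_pos _)]
      exact exp_le_exp.2 (mul_le_mul_of_nonneg_left (min_le_right _ _) ht))
  have hindepZ : iIndepFun Z P := hindep.comp (fun _ x => min x b) fun _ => hcap
  have hidentZ : ∀ k, IdentDistrib (Z k) (Z 0) P P := fun k => (hident k).comp hcap
  calc P.real {ω | c * n ≤ ∑ k ∈ range n, Z k ω}
      ≤ exp (-t * (c * n)) * mgf (Z 0) P t ^ n :=
        measureReal_le_sum_range_le_exp_mul_mgf_pow hZmeas hindepZ hidentZ ht hexp_int _ n
    _ ≤ exp (-t * (c * n)) * exp (t * μ + t ^ 2 * exp (t * b) * q) ^ n := by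
        gcongr; exact mgf_nonneg
    _ = exp (-2 * log n + 4 * q / (δ ^ 2 * n) * (log n ^ 2 * exp (log n / 2))) := by
        rw [← exp_nat_mul, ← exp_add, htb]
        congr 1
        rw [show c = μ + δ by simp [δ]]
        simp only [t]
        field_simp
        ring
    _ ≤ exp (-2 * log n + 32 * q / δ ^ 2) := by
        gcongr
        calc 4 * q / (δ ^ 2 * n) * (log n ^ 2 * exp (log n / 2))
            ≤ 4 * q / (δ ^ 2 * n) * (8 * n) :=
              mul_le_mul_of_nonneg_left (sq_log_mul_exp_half_log_le hn') (by positivity)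
          _ = 32 * q / δ ^ 2 := by field_simp; ring
    _ = exp (32 * q / δ ^ 2) / n ^ 2 := by
        rw [exp_add, mul_comm, ← log_rpow (by positivity), exp_log (by positivity)]
        rw [rpow_neg (by positivity), rpow_two]
        ring

theorem tsum_measure_le_sum_range_min_lt_top [IsProbabilityMeasure P] {Y : ℕ → Ω → ℝ}
    (hmeas : ∀ k, Measurable (Y k)) (hindep : iIndepFun Y P)
    (hident : ∀ k, IdentDistrib (Y k) (Y 0) P P) (hY : MemLp (Y 0) 2 P) {c : ℝ} (hc : P[Y 0] < c) :
    ∑' n : ℕ, P {ω | c * n ≤ ∑ k ∈ range n, min (Y k ω) ((c - P[Y 0]) / 4 * n)} < ∞ := by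
  set K := exp (32 * (∫ ω, Y 0 ω ^ 2 ∂P) / (c - P[Y 0]) ^ 2)
  have hsum : Summable fun n : ℕ => K / ((n + 1 : ℕ) : ℝ) ^ 2 :=
    (((summable_nat_add_iff 1).2 (summable_one_div_nat_pow.2 one_lt_two)).mul_left K).congr
      fun n => mul_one_div _ _
  rw [tsum_eq_zero_add' ENNReal.summable, ENNReal.add_lt_top]
  refine ⟨measure_lt_top _ _, ?_⟩
  calc ∑' n : ℕ, P {ω | c * (n + 1 : ℕ) ≤ ∑ k ∈ range (n + 1),
        min (Y k ω) ((c - P[Y 0]) / 4 * (n + 1 : ℕ))}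
      ≤ ∑' n : ℕ, ENNReal.ofReal (K / ((n + 1 : ℕ) : ℝ) ^ 2) := ENNReal.tsum_le_tsum fun n => by
        rw [← ofReal_measureReal]
        exact ENNReal.ofReal_le_ofReal <|
          measureReal_le_sum_range_min_le_exp_div_sq hmeas hindep hident hY hc (Nat.le_add_left 1 n)
    _ = ENNReal.ofReal (∑' n : ℕ, K / ((n + 1 : ℕ) : ℝ) ^ 2) :=
        (ENNReal.ofReal_tsum_of_nonneg (fun n => by positivity) hsum).symm
    _ < ∞ := ENNReal.ofReal_lt_top

theorem tsum_measure_le_sum_range_lt_top_of_memLp [IsProbabilityMeasure P] {Y : ℕ → Ω → ℝ}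
    (hmeas : ∀ k, Measurable (Y k)) (hindep : iIndepFun Y P)
    (hident : ∀ k, IdentDistrib (Y k) (Y 0) P P) (hY : MemLp (Y 0) 2 P) {c : ℝ} (hc : P[Y 0] < c) :
    ∑' n : ℕ, P {ω | c * n ≤ ∑ k ∈ range n, Y k ω} < ∞ :=
  calc ∑' n : ℕ, P {ω | c * n ≤ ∑ k ∈ range n, Y k ω}
      ≤ ∑' n : ℕ, ((n : ℝ≥0∞) * P {ω | (c - P[Y 0]) / 4 * n < Y 0 ω}
          + P {ω | c * n ≤ ∑ k ∈ range n, min (Y k ω) ((c - P[Y 0]) / 4 * n)}) :=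
        ENNReal.tsum_le_tsum fun n => measure_le_sum_range_le_add_sum_min hident _ _ n
    _ = ∑' n : ℕ, (n : ℝ≥0∞) * P {ω | (c - P[Y 0]) / 4 * n < Y 0 ω}
          + ∑' n : ℕ, P {ω | c * n ≤ ∑ k ∈ range n, min (Y k ω) ((c - P[Y 0]) / 4 * n)} :=
        ENNReal.tsum_add
    _ < ∞ := ENNReal.add_lt_top.2
        ⟨tsum_natCast_mul_measure_lt_lt_top (hmeas 0) hY.integrable_sq (by linarith),
          tsum_measure_le_sum_range_min_lt_top hmeas hindep hident hY hc⟩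

theorem exists_integral_max_neg_natCast_lt [IsFiniteMeasure P] {f : Ω → ℝ}
    (hf : Measurable f) (hpos : Integrable (fun ω => max (f ω) 0) P) {c : ℝ}
    (hc : ((∫ ω, max (f ω) 0 ∂P : ℝ) : EReal)
        - ((∫⁻ ω, ENNReal.ofReal (-(f ω)) ∂P : ℝ≥0∞) : EReal) < c) :
    ∃ M : ℕ, ∫ ω, max (f ω) (-M) ∂P < c := by
  set a := ∫ ω, max (f ω) 0 ∂P
  rcases lt_or_ge a c with hac | hca
  · exact ⟨0, by simpa using hac⟩
  set T : ℕ → Ω → ℝ := fun M ω => min (max (-f ω) 0) M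
  have hT_meas : ∀ M, Measurable (T M) := fun M =>
    (hf.neg.max measurable_const).min measurable_const
  have hT_nonneg : ∀ M ω, 0 ≤ T M ω := fun M ω => le_min (le_max_right _ _) M.cast_nonneg
  have hT_int : ∀ M, Integrable (T M) P := fun M =>
    .of_bound (hT_meas M).aestronglyMeasurable M (.of_forall fun ω => by
      rw [Real.norm_eq_abs, abs_of_nonneg (hT_nonneg M ω)]
      exact min_le_right _ _)
  have hsplit : ∀ M : ℕ, ∫ ω, max (f ω) (-M) ∂P = a - ∫ ω, T M ω ∂P := fun M => by
    rw [← integral_sub hpos (hT_int M)]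
    congr with ω
    simp only [T, max_def, min_def]
    split_ifs <;> linarith
  have hsup : ∫⁻ ω, ENNReal.ofReal (-(f ω)) ∂P = ⨆ M : ℕ, ENNReal.ofReal (∫ ω, T M ω ∂P) := by
    simp_rw [ofReal_integral_eq_lintegral_ofReal (hT_int _) (.of_forall (hT_nonneg _))]
    rw [← lintegral_iSup (fun M => (hT_meas M).ennreal_ofReal)
      fun M N hMN ω => ENNReal.ofReal_le_ofReal (min_le_min le_rfl (by exact_mod_cast hMN))]
    congr with ω
    simp only [T, ENNReal.ofReal_min, ENNReal.ofReal_max, ENNReal.ofReal_zero, _root_.max_zero,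
      ENNReal.ofReal_natCast, ← inf_iSup_eq, ENNReal.iSup_natCast, inf_top_eq]
  have hlt : ENNReal.ofReal (a - c) < ∫⁻ ω, ENNReal.ofReal (-(f ω)) ∂P := by
    by_contra! hle
    have hle' : ((∫⁻ ω, ENNReal.ofReal (-(f ω)) ∂P : ℝ≥0∞) : EReal) ≤ ((a - c : ℝ) : EReal) := by
      simpa [EReal.coe_ennreal_ofReal, max_eq_left (sub_nonneg.2 hca)] using
        EReal.coe_ennreal_le_coe_ennreal_iff.2 hle
    have := EReal.sub_le_sub (le_refl (a : EReal)) hle'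
    rw [← EReal.coe_sub, sub_sub_cancel] at this
    exact hc.not_ge this
  obtain ⟨M, hM⟩ := lt_iSup_iff.1 (hsup ▸ hlt)
  refine ⟨M, ?_⟩
  rw [hsplit]
  linarith [(ENNReal.ofReal_lt_ofReal_iff_of_nonneg (sub_nonneg.2 hca)).1 hM]

end

/-- Biggins' Lemma 1. Let `(X_k)` be i.i.d. real random variables with
`𝔼[(X_0⁺)²] < ∞`; the mean `𝔼X_0 = 𝔼X_0⁺ − 𝔼X_0⁻` (an extended real, possibly `−∞`).
Set `S_n = X_0 + ⋯ + X_{n-1}`.  Then for every `c > 𝔼X_0`, the series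
`∑_n ℙ(S_n ≥ cn)` converges. -/
theorem stmt2 {Ω : Type*} [MeasurableSpace Ω]
    (P : Measure Ω) [IsProbabilityMeasure P]
    (X : ℕ → Ω → ℝ) (hmeas : ∀ n, Measurable (X n))
    (hindep : iIndepFun X P)
    (hident : ∀ n, P.map (X n) = P.map (X 0))
    (hsq : ∫⁻ ω, ENNReal.ofReal ((max (X 0 ω) 0) ^ 2) ∂P < ⊤)
    (c : ℝ)
    -- c is strictly larger than the (possibly −∞) mean 𝔼X₀⁺ − 𝔼X₀⁻, in the extended reals
    (hc : ((∫ ω, max (X 0 ω) 0 ∂P : ℝ) : EReal)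
        - ((∫⁻ ω, ENNReal.ofReal (-(X 0 ω)) ∂P : ℝ≥0∞) : EReal) < (c : EReal)) :
    ∑' n : ℕ, P {ω | c * n ≤ ∑ k ∈ Finset.range n, X k ω} < ⊤ := by
  have hpos_meas : Measurable fun ω => max (X 0 ω) 0 := (hmeas 0).max measurable_const
  have hpos : MemLp (fun ω => max (X 0 ω) 0) 2 P :=
    (memLp_two_iff_integrable_sq hpos_meas.aestronglyMeasurable).2
      ⟨(hpos_meas.pow_const 2).aestronglyMeasurable,
        (hasFiniteIntegral_iff_ofReal (.of_forall fun ω => sq_nonneg _)).2 hsq⟩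
  obtain ⟨M, hM⟩ := exists_integral_max_neg_natCast_lt (hmeas 0) (hpos.integrable one_le_two) hc
  have hcut : Measurable fun x : ℝ => max x (-M) := measurable_id.max measurable_const
  have hY : MemLp (fun ω => max (X 0 ω) (-M)) 2 P :=
    (hpos.add (memLp_const (M : ℝ))).mono (hcut.comp (hmeas 0)).aestronglyMeasurable
      (.of_forall fun ω => by
        have hM0 : (0 : ℝ) ≤ M := M.cast_nonneg
        simp only [Pi.add_apply, Real.norm_eq_abs]
        rw [abs_of_nonneg (add_nonneg (le_max_right _ _) hM0), abs_le]
        constructor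
        · linarith [le_max_right (X 0 ω) (-M), le_max_right (X 0 ω) 0]
        · exact max_le (by linarith [le_max_left (X 0 ω) 0])
            (by linarith [le_max_right (X 0 ω) 0]))
  have hidentY : ∀ k, IdentDistrib (fun ω => max (X k ω) (-M)) (fun ω => max (X 0 ω) (-M)) P P :=
    fun k => (IdentDistrib.mk (hmeas k).aemeasurable (hmeas 0).aemeasurable (hident k)).comp hcut
  refine (ENNReal.tsum_le_tsum fun n =>
    measure_mono (Set.ofPred_subset_ofPred.2 fun ω hω => ?_)).trans_lt
    (tsum_measure_le_sum_range_lt_top_of_memLp (fun k => hcut.comp (hmeas k))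
      (hindep.comp _ fun _ => hcut) hidentY hY hM)
  exact le_trans hω (sum_le_sum fun k _ => le_max_left _ _)
end

section
/- With the setup of the smoothing transform in random environment, set g_n(ξ,u) = u^{-1}|φ_n(ξ,u) − φ_{n-1}(ξ,u)| where φ_n(ξ,u) = Hφ_{n-1}(Tξ,u) and φ_0(ξ,u) = e^{-u}. Then g_{n+1}(ξ,u) ≤ E_ξ[g_n(Tξ, u e^{X_0(ξ)})], where X_0(ξ) has the size-biased distribution G_ξ(log y) = E_ξ[∑_{y_i^{(0)}(ξ)≤y} y_i^{(0)}(ξ)]; iterating, g_{n+1}(ξ,u) ≤ E_ξ[g_1(T^n ξ, u e^{S_n(ξ)})] with S_n = X_0 + ⋯ + X_{n-1}. -/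
open MeasureTheory ProbabilityTheory Filter
open scoped ENNReal

noncomputable section

/-- The shift operator on environments: `(T ξ)_n = ξ_{n+1}`. -/
def shiftT {E : Type*} (ξ : ℕ → E) : ℕ → E := fun n => ξ (n + 1)

/-- The size-biased transfer operator:
`(K g)(ξ,u) = E_ξ[∑_i y_i^{(0)}(ξ) g(Tξ, u y_i^{(0)}(ξ))] = E_ξ[g(Tξ, u e^{X_0(ξ)})]`,
where `X_0(ξ)` has the size-biased distribution `G_ξ(log y) = E_ξ[∑_{y_i ≤ y} y_i]`.
Its `n`-th iterate realizes `E_ξ[g(T^n ξ, u e^{S_n(ξ)})]` with `S_n = X_0 + ⋯ + X_{n−1}`. -/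
noncomputable def Kop {E : Type*} [MeasurableSpace E] (Y : Kernel (ℕ → E) (ℕ → ℝ))
    (g : (ℕ → E) → ℝ → ℝ) : (ℕ → E) → ℝ → ℝ :=
  fun ξ u => ∫ y, ∑' i, y i * g (shiftT ξ) (u * y i) ∂(Y ξ)

/-!
For `a_i, b_i ∈ [0, 1]`, `|∏ a_i - ∏ b_i| ≤ ∑ |a_i - b_i|`. With `a_i = φ_{n+1}(Tξ, u y_i)` and
`b_i = φ_n(Tξ, u y_i)` the right-hand side is `u ∑ y_i g_n(Tξ, u y_i)`, so taking `E_ξ` in the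
recursion `φ_{n+1}(ξ, u) = E_ξ ∏ φ_n(Tξ, u y_i)` gives `g_{n+1}(ξ, u) ≤ (K g_n)(ξ, u)`.
Comparing with `φ ≡ 1` in the same way shows that `1 - u ≤ φ_n ≤ 1` propagates, so `0 ≤ g_n ≤ 1`;
since `E_ξ[∑ y_i] = 1`, `K` preserves this bound, and it is monotone, so the one-step bound
iterates. The i.i.d. environment is stationary under `T`, which lets almost-sure statements in
`ξ` pass to `Tξ`.
-/

open Function Set

theorem norm_prod_sub_prod_le_sum_norm_sub {ι R : Type*} [NormedCommRing R] [NormOneClass R]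
    (s : Finset ι) {a b : ι → R} (ha : ∀ i ∈ s, ‖a i‖ ≤ 1) (hb : ∀ i ∈ s, ‖b i‖ ≤ 1) :
    ‖∏ i ∈ s, a i - ∏ i ∈ s, b i‖ ≤ ∑ i ∈ s, ‖a i - b i‖ := by
  classical
  induction s using Finset.induction_on with
  | empty => simp
  | insert x s hx ih =>
    simp only [Finset.forall_mem_insert] at ha hb
    have hA : ‖∏ i ∈ s, a i‖ ≤ 1 :=
      (Finset.norm_prod_le _ _).trans (Finset.prod_le_one (fun _ _ => norm_nonneg _) ha.2)
    rw [Finset.prod_insert hx, Finset.prod_insert hx, Finset.sum_insert hx]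
    calc ‖a x * ∏ i ∈ s, a i - b x * ∏ i ∈ s, b i‖
        = ‖(a x - b x) * ∏ i ∈ s, a i + b x * (∏ i ∈ s, a i - ∏ i ∈ s, b i)‖ := by ring_nf
      _ ≤ ‖a x - b x‖ * ‖∏ i ∈ s, a i‖ + ‖b x‖ * ‖∏ i ∈ s, a i - ∏ i ∈ s, b i‖ :=
        (norm_add_le _ _).trans (add_le_add (norm_mul_le _ _) (norm_mul_le _ _))
      _ ≤ ‖a x - b x‖ * 1 + 1 * ∑ i ∈ s, ‖a i - b i‖ := by
        gcongr
        exacts [hb.1, ih ha.2 hb.2]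
      _ = ‖a x - b x‖ + ∑ i ∈ s, ‖a i - b i‖ := by ring

section Environment

variable {E : Type*} [MeasurableSpace E]

lemma measurable_shiftT : Measurable (shiftT (E := E)) :=
  measurable_pi_lambda _ fun n => measurable_pi_apply (n + 1)

lemma measurePreserving_shiftT {τ : Measure (ℕ → E)} (hindep : iIndepFun (fun n ξ => ξ n) τ)
    (hident : ∀ n, τ.map (fun ξ => ξ n) = τ.map (fun ξ => ξ 0)) :
    MeasurePreserving shiftT τ τ := by
  have hlaw : ∀ σ : ℕ → ℕ, σ.Injective →
      τ.map (fun ξ n => ξ (σ n)) = Measure.infinitePi fun _ => τ.map (fun ξ => ξ 0) := by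
    intro σ hσ
    rw [(hindep.precomp hσ).map_fun_eq_infinitePi_map fun n => measurable_pi_apply (σ n)]
    simp only [hident]
  refine ⟨measurable_shiftT, ?_⟩
  calc τ.map shiftT = _ := hlaw (· + 1) (add_left_injective 1)
    _ = τ.map id := (hlaw id injective_id).symm
    _ = τ := Measure.map_id

end Environment

structure IsOffspringLaw (μ : Measure (ℕ → ℝ)) : Prop where
  nonneg : ∀ᵐ y ∂μ, ∀ i, 0 ≤ y i
  finite_support : ∀ᵐ y ∂μ, (support y).Finite
  lintegral_tsum : ∫⁻ y, ∑' i, ENNReal.ofReal (y i) ∂μ = 1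

def smoothingTransform (μ : Measure (ℕ → ℝ)) (f : ℝ → ℝ) (u : ℝ) : ℝ :=
  ∫ y, ∏' i, f (u * y i) ∂μ

def sizeBiasedTransform (μ : Measure (ℕ → ℝ)) (h : ℝ → ℝ) (u : ℝ) : ℝ :=
  ∫ y, ∑' i, y i * h (u * y i) ∂μ

/-- Only the values on `[0, ∞)` matter; measurability is asked of the extension by `f 0` to
the negative half-line. -/
def MeasurableOnNonneg (f : ℝ → ℝ) : Prop :=
  Measurable fun v => f (max v 0)

/-- The properties of a Laplace transform `u ↦ E e^{-uW}`, `W ≥ 0`, `E W ≤ 1`, that are used. -/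
structure IsLaplaceLike (f : ℝ → ℝ) : Prop where
  measurableOnNonneg : MeasurableOnNonneg f
  nonneg : ∀ v, 0 ≤ v → 0 ≤ f v
  le_one : ∀ v, 0 ≤ v → f v ≤ 1
  one_sub_le : ∀ v, 0 ≤ v → 1 - v ≤ f v

structure IsUnitBounded (h : ℝ → ℝ) : Prop where
  measurableOnNonneg : MeasurableOnNonneg h
  nonneg : ∀ v, 0 ≤ v → 0 ≤ h v
  le_one : ∀ v, 0 ≤ v → h v ≤ 1

lemma measurableOnNonneg_integral {α : Type*} [MeasurableSpace α] {μ : Measure α} [SFinite μ]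
    {F : ℝ → α → ℝ} {G : ℝ × α → ℝ} (hG : Measurable G)
    (hFG : ∀ u, 0 ≤ u → F u =ᵐ[μ] fun y => G (u, y)) :
    MeasurableOnNonneg fun u => ∫ y, F u y ∂μ := by
  have hint : (fun u => ∫ y, F (max u 0) y ∂μ) = fun u => ∫ y, G (max u 0, y) ∂μ :=
    funext fun u => integral_congr_ae (hFG _ (le_max_right u 0))
  unfold MeasurableOnNonneg
  rw [hint]
  exact hG.stronglyMeasurable.integral_prod_right'.measurable.comp
    (measurable_id.max measurable_const)

namespace IsLaplaceLike

variable {f f' g : ℝ → ℝ}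

lemma apply_zero (hf : IsLaplaceLike f) : f 0 = 1 :=
  le_antisymm (hf.le_one 0 le_rfl) (by simpa using hf.one_sub_le 0 le_rfl)

lemma norm_le_one (hf : IsLaplaceLike f) {v : ℝ} (hv : 0 ≤ v) : ‖f v‖ ≤ 1 :=
  abs_le.2 ⟨by linarith [hf.nonneg v hv], hf.le_one v hv⟩

lemma congr (hf : IsLaplaceLike f) (hfg : ∀ v, 0 ≤ v → f v = g v) : IsLaplaceLike g where
  measurableOnNonneg := by
    have : (fun v => g (max v 0)) = fun v => f (max v 0) :=
      funext fun v => (hfg _ (le_max_right v 0)).symm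
    unfold MeasurableOnNonneg
    rw [this]
    exact hf.measurableOnNonneg
  nonneg v hv := hfg v hv ▸ hf.nonneg v hv
  le_one v hv := hfg v hv ▸ hf.le_one v hv
  one_sub_le v hv := hfg v hv ▸ hf.one_sub_le v hv

lemma isUnitBounded_inv_mul_abs_sub (hf : IsLaplaceLike f) (hf' : IsLaplaceLike f') :
    IsUnitBounded fun v => v⁻¹ * |f' v - f v| where
  measurableOnNonneg :=
    (measurable_id.max measurable_const).inv.mul
      (hf'.measurableOnNonneg.sub hf.measurableOnNonneg).abs
  nonneg v hv := mul_nonneg (inv_nonneg.2 hv) (abs_nonneg _)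
  le_one v hv := by
    refine inv_mul_le_one_of_le₀ (abs_sub_le_iff.2 ⟨?_, ?_⟩) hv
    · linarith [hf'.le_one v hv, hf.one_sub_le v hv]
    · linarith [hf.le_one v hv, hf'.one_sub_le v hv]

end IsLaplaceLike

lemma isLaplaceLike_one : IsLaplaceLike fun _ => 1 where
  measurableOnNonneg := measurable_const
  nonneg _ _ := zero_le_one
  le_one _ _ := le_rfl
  one_sub_le _ hv := by linarith

lemma isLaplaceLike_exp_neg : IsLaplaceLike fun v => Real.exp (-v) where
  measurableOnNonneg := by
    unfold MeasurableOnNonneg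
    fun_prop
  nonneg _ _ := (Real.exp_pos _).le
  le_one _ hv := Real.exp_le_one_iff.2 (neg_nonpos.2 hv)
  one_sub_le v _ := by linarith [Real.add_one_le_exp (-v)]

section FiniteSupport

variable {y : ℕ → ℝ} {f f' h h' : ℝ → ℝ} {u : ℝ}

lemma tprod_comp_mul_eq_prod (hfin : (support y).Finite) (hf : f 0 = 1) (u : ℝ) :
    ∏' i, f (u * y i) = ∏ i ∈ hfin.toFinset, f (u * y i) :=
  tprod_eq_prod' fun i hi => hfin.mem_toFinset.2 fun hyi => hi (by simp [hyi, hf])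

lemma summable_mul_of_finite_support (hfin : (support y).Finite) (c : ℕ → ℝ) :
    Summable fun i => y i * c i :=
  summable_of_hasFiniteSupport (hfin.subset (support_mul_subset_left _ _))

lemma IsLaplaceLike.tprod_comp_mul_mem_Icc (hf : IsLaplaceLike f) (hy : ∀ i, 0 ≤ y i)
    (hfin : (support y).Finite) (hu : 0 ≤ u) : ∏' i, f (u * y i) ∈ Icc 0 1 := by
  rw [tprod_comp_mul_eq_prod hfin hf.apply_zero]
  exact ⟨Finset.prod_nonneg fun i _ => hf.nonneg _ (mul_nonneg hu (hy i)),
    Finset.prod_le_one (fun i _ => hf.nonneg _ (mul_nonneg hu (hy i)))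
      fun i _ => hf.le_one _ (mul_nonneg hu (hy i))⟩

lemma IsLaplaceLike.abs_tprod_sub_tprod_le (hf : IsLaplaceLike f) (hf' : IsLaplaceLike f')
    (hy : ∀ i, 0 ≤ y i) (hfin : (support y).Finite) (hu : 0 ≤ u) :
    |∏' i, f' (u * y i) - ∏' i, f (u * y i)|
      ≤ u * ∑' i, y i * ((u * y i)⁻¹ * |f' (u * y i) - f (u * y i)|) := by
  have hterm : ∀ i, |f' (u * y i) - f (u * y i)|
      = u * (y i * ((u * y i)⁻¹ * |f' (u * y i) - f (u * y i)|)) := by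
    intro i
    rcases eq_or_ne (u * y i) 0 with h0 | h0
    · simp [h0, hf.apply_zero, hf'.apply_zero]
    · rw [← mul_assoc, mul_inv_cancel_left₀ h0]
  rw [tprod_comp_mul_eq_prod hfin hf.apply_zero, tprod_comp_mul_eq_prod hfin hf'.apply_zero,
    tsum_eq_sum' ((support_mul_subset_left _ _).trans hfin.coe_toFinset.ge), Finset.mul_sum]
  calc _ ≤ ∑ i ∈ hfin.toFinset, |f' (u * y i) - f (u * y i)| := by
        simpa only [Real.norm_eq_abs] using norm_prod_sub_prod_le_sum_norm_sub _
          (fun i _ => hf'.norm_le_one (mul_nonneg hu (hy i)))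
          (fun i _ => hf.norm_le_one (mul_nonneg hu (hy i)))
    _ = _ := Finset.sum_congr rfl fun i _ => hterm i

lemma IsUnitBounded.tsum_mul_comp_mem_Icc (hh : IsUnitBounded h) (hy : ∀ i, 0 ≤ y i)
    (hfin : (support y).Finite) (hu : 0 ≤ u) :
    ∑' i, y i * h (u * y i) ∈ Icc 0 (∑' i, y i) :=
  ⟨tsum_nonneg fun i => mul_nonneg (hy i) (hh.nonneg _ (mul_nonneg hu (hy i))),
    (summable_mul_of_finite_support hfin _).tsum_le_tsum
      (fun i => mul_le_of_le_one_right (hy i) (hh.le_one _ (mul_nonneg hu (hy i))))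
      (summable_of_hasFiniteSupport hfin)⟩

lemma tsum_mul_comp_le_tsum_mul_comp (hh : ∀ v, 0 < v → h v ≤ h' v) (hy : ∀ i, 0 ≤ y i)
    (hfin : (support y).Finite) (hu : 0 < u) :
    ∑' i, y i * h (u * y i) ≤ ∑' i, y i * h' (u * y i) := by
  refine (summable_mul_of_finite_support hfin _).tsum_le_tsum (fun i => ?_) (summable_mul_of_finite_support hfin _)
  rcases (hy i).eq_or_lt with h0 | h0
  · simp [← h0]
  · exact mul_le_mul_of_nonneg_left (hh _ (mul_pos hu h0)) (hy i)

end FiniteSupport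

namespace IsOffspringLaw

variable {μ : Measure (ℕ → ℝ)} {f f' h h' : ℝ → ℝ} {u : ℝ}

lemma ae_eq_max (hμ : IsOffspringLaw μ) (hu : 0 ≤ u) (f : ℝ → ℝ) :
    ∀ᵐ y ∂μ, ∀ i, f (u * y i) = f (max (u * y i) 0) := by
  filter_upwards [hμ.nonneg] with y hy i
  rw [max_eq_left (mul_nonneg hu (hy i))]

lemma integrable_tsum (hμ : IsOffspringLaw μ) : Integrable (fun y => ∑' i, y i) μ ∧
    ∫ y, ∑' i, y i ∂μ = 1 := by
  have hnonneg : 0 ≤ᵐ[μ] fun y => ∑' i, y i := by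
    filter_upwards [hμ.nonneg] with y hy using tsum_nonneg hy
  have hmeas : AEStronglyMeasurable (fun y => ∑' i, y i) μ :=
    (Measurable.tsum measurable_pi_apply).aestronglyMeasurable
  have hlin : ∫⁻ y, ENNReal.ofReal (∑' i, y i) ∂μ = 1 := by
    rw [← hμ.lintegral_tsum]
    refine lintegral_congr_ae ?_
    filter_upwards [hμ.nonneg, hμ.finite_support] with y hy hfin
    exact ENNReal.ofReal_tsum_of_nonneg hy (summable_of_hasFiniteSupport hfin)
  refine ⟨⟨hmeas, ?_⟩, ?_⟩
  · rw [hasFiniteIntegral_iff_ofReal hnonneg, hlin]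
    exact ENNReal.one_lt_top
  · rw [integral_eq_lintegral_of_nonneg_ae hnonneg hmeas, hlin, ENNReal.toReal_one]

lemma integrable_tsum_mul (hμ : IsOffspringLaw μ) (hh : IsUnitBounded h) (hu : 0 ≤ u) :
    Integrable (fun y => ∑' i, y i * h (u * y i)) μ := by
  have hmeas : Measurable fun y : ℕ → ℝ => ∑' i, y i * h (max (u * y i) 0) :=
    Measurable.tsum fun i => (measurable_pi_apply i).mul
      (hh.measurableOnNonneg.comp (measurable_const.mul (measurable_pi_apply i)))
  refine hμ.integrable_tsum.1.mono' (hmeas.aestronglyMeasurable.congr ?_) ?_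
  · filter_upwards [hμ.ae_eq_max hu h] with y hy using tsum_congr fun i => by rw [hy i]
  · filter_upwards [hμ.nonneg, hμ.finite_support] with y hy hfin
    have := hh.tsum_mul_comp_mem_Icc hy hfin hu
    rw [Real.norm_eq_abs, abs_of_nonneg this.1]
    exact this.2

lemma sizeBiasedTransform_mono (hμ : IsOffspringLaw μ) (hh : ∀ v, 0 < v → 0 ≤ h v)
    (hh' : IsUnitBounded h') (hle : ∀ v, 0 < v → h v ≤ h' v) (hu : 0 < u) :
    sizeBiasedTransform μ h u ≤ sizeBiasedTransform μ h' u := by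
  refine integral_mono_of_nonneg ?_ (hμ.integrable_tsum_mul hh' hu.le) ?_
  · filter_upwards [hμ.nonneg, hμ.finite_support] with y hy hfin
    simpa using tsum_mul_comp_le_tsum_mul_comp (h := fun _ => 0) hh hy hfin hu
  · filter_upwards [hμ.nonneg, hμ.finite_support] with y hy hfin
    exact tsum_mul_comp_le_tsum_mul_comp hle hy hfin hu

variable [IsProbabilityMeasure μ]

lemma integrable_tprod (hμ : IsOffspringLaw μ) (hf : IsLaplaceLike f) (hu : 0 ≤ u) :
    Integrable (fun y => ∏' i, f (u * y i)) μ := by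
  have hmeas : Measurable fun y : ℕ → ℝ => ∏' i, f (max (u * y i) 0) :=
    Measurable.tprod fun i =>
      hf.measurableOnNonneg.comp (measurable_const.mul (measurable_pi_apply i))
  refine (integrable_const 1).mono' (hmeas.aestronglyMeasurable.congr ?_) ?_
  · filter_upwards [hμ.ae_eq_max hu f] with y hy using (tprod_congr hy).symm
  · filter_upwards [hμ.nonneg, hμ.finite_support] with y hy hfin
    have := hf.tprod_comp_mul_mem_Icc hy hfin hu
    rw [Real.norm_eq_abs, abs_of_nonneg this.1]
    exact this.2

lemma isUnitBounded_sizeBiasedTransform (hμ : IsOffspringLaw μ) (hh : IsUnitBounded h) :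
    IsUnitBounded (sizeBiasedTransform μ h) where
  measurableOnNonneg := by
    refine measurableOnNonneg_integral (G := fun p => ∑' i, p.2 i * h (max (p.1 * p.2 i) 0))
      (Measurable.tsum fun i => ((measurable_pi_apply i).comp measurable_snd).mul
        (hh.measurableOnNonneg.comp
          (measurable_fst.mul ((measurable_pi_apply i).comp measurable_snd)))) fun u hu => ?_
    filter_upwards [hμ.ae_eq_max hu h] with y hy using tsum_congr fun i => by rw [hy i]
  nonneg u hu := integral_nonneg_of_ae <| by
    filter_upwards [hμ.nonneg, hμ.finite_support] with y hy hfin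
    exact (hh.tsum_mul_comp_mem_Icc hy hfin hu).1
  le_one u hu := by
    refine (integral_mono_ae (hμ.integrable_tsum_mul hh hu) hμ.integrable_tsum.1 ?_).trans
      hμ.integrable_tsum.2.le
    filter_upwards [hμ.nonneg, hμ.finite_support] with y hy hfin
    exact (hh.tsum_mul_comp_mem_Icc hy hfin hu).2

lemma abs_smoothingTransform_sub_le (hμ : IsOffspringLaw μ) (hf : IsLaplaceLike f)
    (hf' : IsLaplaceLike f') (hu : 0 ≤ u) :
    |smoothingTransform μ f' u - smoothingTransform μ f u|
      ≤ u * sizeBiasedTransform μ (fun v => v⁻¹ * |f' v - f v|) u := by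
  rw [smoothingTransform, smoothingTransform, sizeBiasedTransform,
    ← integral_sub (hμ.integrable_tprod hf' hu) (hμ.integrable_tprod hf hu),
    ← integral_const_mul]
  refine abs_integral_le_integral_abs.trans (integral_mono_of_nonneg
    (.of_forall fun _ => abs_nonneg _)
    ((hμ.integrable_tsum_mul (hf.isUnitBounded_inv_mul_abs_sub hf') hu).const_mul u) ?_)
  filter_upwards [hμ.nonneg, hμ.finite_support] with y hy hfin
  exact hf.abs_tprod_sub_tprod_le hf' hy hfin hu

lemma isLaplaceLike_smoothingTransform (hμ : IsOffspringLaw μ) (hf : IsLaplaceLike f) :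
    IsLaplaceLike (smoothingTransform μ f) where
  measurableOnNonneg := by
    refine measurableOnNonneg_integral (G := fun p => ∏' i, f (max (p.1 * p.2 i) 0))
      (Measurable.tprod fun i => hf.measurableOnNonneg.comp
        (measurable_fst.mul ((measurable_pi_apply i).comp measurable_snd))) fun u hu => ?_
    filter_upwards [hμ.ae_eq_max hu f] with y hy using tprod_congr hy
  nonneg u hu := integral_nonneg_of_ae <| by
    filter_upwards [hμ.nonneg, hμ.finite_support] with y hy hfin
    exact (hf.tprod_comp_mul_mem_Icc hy hfin hu).1
  le_one u hu := by
    refine (integral_mono_ae (hμ.integrable_tprod hf hu) (integrable_const 1) ?_).trans (by simp)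
    filter_upwards [hμ.nonneg, hμ.finite_support] with y hy hfin
    exact (hf.tprod_comp_mul_mem_Icc hy hfin hu).2
  one_sub_le u hu := by
    have hdiff := hμ.abs_smoothingTransform_sub_le hf isLaplaceLike_one hu
    have hK := (hμ.isUnitBounded_sizeBiasedTransform
      (hf.isUnitBounded_inv_mul_abs_sub isLaplaceLike_one)).le_one u hu
    have hone : smoothingTransform μ (fun _ => 1) u = 1 := by simp [smoothingTransform]
    rw [hone] at hdiff
    nlinarith [le_abs_self (1 - smoothingTransform μ f u)]

end IsOffspringLaw

section Iteration

variable {E : Type*} [MeasurableSpace E] {τ : Measure (ℕ → E)} {Y : Kernel (ℕ → E) (ℕ → ℝ)}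
  [IsMarkovKernel Y]

lemma ae_isUnitBounded_iterate_Kop (hT : Measure.QuasiMeasurePreserving shiftT τ τ)
    (hY : ∀ᵐ ξ ∂τ, IsOffspringLaw (Y ξ)) {G : (ℕ → E) → ℝ → ℝ}
    (hG : ∀ᵐ ξ ∂τ, IsUnitBounded (G ξ)) (n : ℕ) :
    ∀ᵐ ξ ∂τ, IsUnitBounded ((Kop Y)^[n] G ξ) := by
  induction n with
  | zero => exact hG
  | succ n ih =>
    filter_upwards [hY, hT.ae ih] with ξ hμ hK
    rw [Function.iterate_succ_apply']
    exact hμ.isUnitBounded_sizeBiasedTransform hK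

lemma le_iterate_Kop (hT : Measure.QuasiMeasurePreserving shiftT τ τ)
    (hY : ∀ᵐ ξ ∂τ, IsOffspringLaw (Y ξ)) {G : ℕ → (ℕ → E) → ℝ → ℝ}
    (hG : ∀ n, ∀ᵐ ξ ∂τ, IsUnitBounded (G n ξ))
    (hstep : ∀ n, ∀ᵐ ξ ∂τ, ∀ u, 0 < u → G (n + 1) ξ u ≤ Kop Y (G n) ξ u) (n : ℕ) :
    ∀ᵐ ξ ∂τ, ∀ u, 0 < u → G n ξ u ≤ (Kop Y)^[n] (G 0) ξ u := by
  induction n with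
  | zero => exact .of_forall fun _ _ _ => le_rfl
  | succ n ih =>
    filter_upwards [hstep n, hY, hT.ae ih, hT.ae (hG n),
      hT.ae (ae_isUnitBounded_iterate_Kop hT hY (hG 0) n)] with ξ hle hμ hih hGn hK u hu
    rw [Function.iterate_succ_apply']
    exact (hle u hu).trans
      (hμ.sizeBiasedTransform_mono (fun v hv => hGn.nonneg v hv.le) hK hih hu)

end Iteration

theorem stmt9_general {E : Type*} [MeasurableSpace E]
    (τ : Measure (ℕ → E))
    (hEnvIndep : iIndepFun (fun n ξ => ξ n) τ)
    (hEnvIdent : ∀ n, τ.map (fun ξ => ξ n) = τ.map (fun ξ => ξ 0))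
    (Y : Kernel (ℕ → E) (ℕ → ℝ)) [IsMarkovKernel Y]
    (hpos : ∀ᵐ ξ ∂τ, ∀ᵐ y ∂(Y ξ), ∀ i, 0 ≤ y i)
    (hmean : ∀ᵐ ξ ∂τ, ∫⁻ y, ∑' i, ENNReal.ofReal (y i) ∂(Y ξ) = 1)
    (hfinsupp : ∀ᵐ ξ ∂τ, ∀ᵐ y ∂(Y ξ), (Function.support y).Finite)
    (φ : ℕ → (ℕ → E) → ℝ → ℝ)
    (hφ0 : ∀ ξ u, φ 0 ξ u = Real.exp (-u))
    (hφrec : ∀ n, ∀ᵐ ξ ∂τ, ∀ u : ℝ, 0 ≤ u →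
      φ (n + 1) ξ u = ∫ y, ∏' i, φ n (shiftT ξ) (u * y i) ∂(Y ξ))
    -- `g n` is the paper's `g_{n+1}`: `g n ξ u = u⁻¹ |φ_{n+1}(ξ,u) − φ_n(ξ,u)|`
    (g : ℕ → (ℕ → E) → ℝ → ℝ)
    (hg : ∀ n ξ u, g n ξ u = u⁻¹ * |φ (n + 1) ξ u - φ n ξ u|) :
    ∀ n : ℕ, ∀ᵐ ξ ∂τ, ∀ u : ℝ, 0 < u →
      g (n + 1) ξ u ≤ Kop Y (g n) ξ u ∧
      g n ξ u ≤ (Kop Y)^[n] (g 0) ξ u := by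
  have hT := (measurePreserving_shiftT hEnvIndep hEnvIdent).quasiMeasurePreserving
  have hY : ∀ᵐ ξ ∂τ, IsOffspringLaw (Y ξ) := by
    filter_upwards [hpos, hfinsupp, hmean] with ξ h₁ h₂ h₃ using ⟨h₁, h₂, h₃⟩
  have hφ : ∀ n, ∀ᵐ ξ ∂τ, IsLaplaceLike (φ n ξ) := by
    intro n
    induction n with
    | zero => exact .of_forall fun ξ => funext (hφ0 ξ) ▸ isLaplaceLike_exp_neg
    | succ n ih =>
      filter_upwards [hφrec n, hT.ae ih, hY] with ξ hrec hφn hμ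
      exact (hμ.isLaplaceLike_smoothingTransform hφn).congr fun u hu => (hrec u hu).symm
  have hgφ : ∀ n ξ, g n ξ = fun v => v⁻¹ * |φ (n + 1) ξ v - φ n ξ v| := fun n ξ => funext (hg n ξ)
  have hg_bdd : ∀ n, ∀ᵐ ξ ∂τ, IsUnitBounded (g n ξ) := fun n => by
    filter_upwards [hφ n, hφ (n + 1)] with ξ h₀ h₁
    rw [hgφ]
    exact h₀.isUnitBounded_inv_mul_abs_sub h₁
  have hstep : ∀ n, ∀ᵐ ξ ∂τ, ∀ u, 0 < u → g (n + 1) ξ u ≤ Kop Y (g n) ξ u := fun n => by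
    filter_upwards [hφrec n, hφrec (n + 1), hT.ae (hφ n), hT.ae (hφ (n + 1)), hY]
      with ξ h₀ h₁ hφ₀ hφ₁ hμ u hu
    have hdiff := hμ.abs_smoothingTransform_sub_le hφ₀ hφ₁ hu.le
    rw [← hgφ] at hdiff
    rw [hg, h₁ u hu.le, h₀ u hu.le, inv_mul_le_iff₀ hu]
    exact hdiff
  intro n
  filter_upwards [hstep n, le_iterate_Kop hT hY hg_bdd hstep n] with ξ h₁ h₂ u hu
  exact ⟨h₁ u hu, h₂ u hu⟩

/-- With `φ_0(ξ,u) = e^{−u}`, `φ_{n+1} = Hφ_n(Tξ,u)` and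
`g_{n+1}(ξ,u) = u⁻¹|φ_{n+1}(ξ,u) − φ_n(ξ,u)|` (here `g (n+1)` denotes the paper's
`g_{n+2}`, i.e. `g n = g_{n+1}` of the paper), one has
`g_{n+1}(ξ,u) ≤ E_ξ[g_n(Tξ, u e^{X_0(ξ)})] = (K g_n)(ξ,u)`, and iterating,
`g_{n+1}(ξ,u) ≤ E_ξ[g_1(T^n ξ, u e^{S_n(ξ)})] = (K^[n] g_1)(ξ,u)`. -/
theorem stmt9 {E : Type*} [MeasurableSpace E]
    (τ : Measure (ℕ → E)) [IsProbabilityMeasure τ]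
    (hEnvIndep : iIndepFun (fun n ξ => ξ n) τ)
    (hEnvIdent : ∀ n, τ.map (fun ξ => ξ n) = τ.map (fun ξ => ξ 0))
    (Y : Kernel (ℕ → E) (ℕ → ℝ)) [IsMarkovKernel Y]
    (hY0 : ∀ ξ ξ' : ℕ → E, ξ 0 = ξ' 0 → Y ξ = Y ξ')
    (hpos : ∀ᵐ ξ ∂τ, ∀ᵐ y ∂(Y ξ), ∀ i, 0 ≤ y i)
    (hmean : ∀ᵐ ξ ∂τ, ∫⁻ y, ∑' i, ENNReal.ofReal (y i) ∂(Y ξ) = 1)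
    (hfinsupp : ∀ᵐ ξ ∂τ, ∀ᵐ y ∂(Y ξ), (Function.support y).Finite)
    (φ : ℕ → (ℕ → E) → ℝ → ℝ)
    (hφ0 : ∀ ξ u, φ 0 ξ u = Real.exp (-u))
    (hφrec : ∀ n, ∀ᵐ ξ ∂τ, ∀ u : ℝ, 0 ≤ u →
      φ (n + 1) ξ u = ∫ y, ∏' i, φ n (shiftT ξ) (u * y i) ∂(Y ξ))
    -- `g n` is the paper's `g_{n+1}`: `g n ξ u = u⁻¹ |φ_{n+1}(ξ,u) − φ_n(ξ,u)|`
    (g : ℕ → (ℕ → E) → ℝ → ℝ)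
    (hg : ∀ n ξ u, g n ξ u = u⁻¹ * |φ (n + 1) ξ u - φ n ξ u|) :
    ∀ n : ℕ, ∀ᵐ ξ ∂τ, ∀ u : ℝ, 0 < u →
      g (n + 1) ξ u ≤ Kop Y (g n) ξ u ∧
      g n ξ u ≤ (Kop Y)^[n] (g 0) ξ u :=
  stmt9_general τ hEnvIndep hEnvIdent Y hpos hmean hfinsupp φ hφ0 hφrec g hg
end
end
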